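/- arXiv:1610.08680 — 5 statements merged into one kernel-verified Lean document; each statement's English description precedes it below -/
import Mathlib

section
/- Let w(s,t) for s,t ∈ ℕ be indeterminates and let ℂ_w[x,y] be the unital associative ℂ-algebra generated by x, y subject to yx = w(1,1)xy, x·w(s,t) = w(s+1,t)·x, and y·w(s,t) = w(s,t+1)·y. Define W(s,t) = ∏_{j=1}^t w(s,j), and define weight-dependent binomial coefficients [n choose k]_w by [0 choose 0]_w = 1, [n choose k]_w = 0 for k < 0 or k > n, and the recurrence [n+1 choose k]_w = [n choose k]_w + [n choose k-1]_w · W(k, n+1-k). Then for all n ∈ ℕ₀, (x+y)^n = Σ_{k=0}^n [n choose k]_w x^k y^{n-k} in ℂ_w[x,y]. -/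
/-- The big (column) weight `W(s,t) = ∏_{j=1}^t w(s,j)`. -/
def bigW {A : Type*} [CommRing A] (w : ℕ → ℕ → A) (s t : ℕ) : A :=
  ∏ j ∈ Finset.range t, w s (j + 1)

/-- The weight-dependent binomial coefficients, defined by the recurrence
`[n+1, k] = [n, k] + [n, k-1] * W(k, n+1-k)` with `[0,0] = 1` and `[n,k] = 0`
for `k < 0` or `k > n`. -/
def wBinom {A : Type*} [CommRing A] (w : ℕ → ℕ → A) : ℕ → ℕ → A
  | 0, 0 => 1
  | 0, _ + 1 => 0
  | n + 1, 0 => wBinom w n 0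
  | n + 1, k + 1 => wBinom w n (k + 1) + wBinom w n k * bigW w (k + 1) (n - k)

section Aux
variable {A R : Type*} [CommRing A] [Algebra ℂ A] [Ring R] [Algebra ℂ R]
  (w : ℕ → ℕ → A) (ι : A →ₐ[ℂ] R) (x y : R)

lemma wBinom_eq_zero : ∀ n k : ℕ, n < k → wBinom w n k = 0 := by
  intro n
  induction n with
  | zero => intro k hk; match k, hk with | k + 1, _ => rfl
  | succ n ih =>
    intro k hk
    match k, hk with
    | k + 1, hk =>
      have h1 : n < k + 1 := by omega
      have h2 : n < k := by omega
      show wBinom w n (k + 1) + wBinom w n k * bigW w (k + 1) (n - k) = 0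
      rw [ih _ h1, ih _ h2]; ring

lemma comm_x (hx : ∀ s t : ℕ, x * ι (w s t) = ι (w (s + 1) t) * x) :
    ∀ s m : ℕ, ∀ z : R, x * (ι (bigW w s m) * z) = ι (bigW w (s + 1) m) * (x * z) := by
  intro s m
  induction m with
  | zero => intro z; simp [bigW]
  | succ m ih =>
    intro z
    have : bigW w s (m + 1) = bigW w s m * w s (m + 1) := by
      simp [bigW, Finset.prod_range_succ]
    have h2 : bigW w (s + 1) (m + 1) = bigW w (s + 1) m * w (s + 1) (m + 1) := by
      simp [bigW, Finset.prod_range_succ]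
    rw [this, h2, map_mul, map_mul, mul_assoc, ih, ← mul_assoc x, hx, mul_assoc,
      ← mul_assoc]

lemma comm_xpow (hx : ∀ s t : ℕ, x * ι (w s t) = ι (w (s + 1) t) * x) :
    ∀ k s m : ℕ, ∀ z : R, x ^ k * (ι (bigW w s m) * z) = ι (bigW w (s + k) m) * (x ^ k * z) := by
  intro k
  induction k with
  | zero => intro s m z; simp
  | succ k ih =>
    intro s m z
    rw [pow_succ', mul_assoc, ih, comm_x w ι x hx, mul_assoc, ← mul_assoc x, ← pow_succ',
      Nat.add_assoc]

lemma comm_ypow_w (hy : ∀ s t : ℕ, y * ι (w s t) = ι (w s (t + 1)) * y) :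
    ∀ m s t : ℕ, y ^ m * ι (w s t) = ι (w s (t + m)) * y ^ m := by
  intro m
  induction m with
  | zero => intro s t; simp
  | succ m ih =>
    intro s t
    rw [pow_succ, mul_assoc, hy, ← mul_assoc, ih, mul_assoc, ← pow_succ]
    ring_nf

lemma comm_ypow_x (hyx : y * x = ι (w 1 1) * (x * y))
    (hy : ∀ s t : ℕ, y * ι (w s t) = ι (w s (t + 1)) * y) :
    ∀ m : ℕ, y ^ m * x = ι (bigW w 1 m) * (x * y ^ m) := by
  intro m
  induction m with
  | zero => simp [bigW]
  | succ m ih =>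
    have hB : bigW w 1 (m + 1) = bigW w 1 m * w 1 (m + 1) := by
      simp [bigW, Finset.prod_range_succ]
    calc y ^ (m + 1) * x = y ^ m * (y * x) := by rw [pow_succ, mul_assoc]
      _ = (y ^ m * ι (w 1 1)) * (x * y) := by rw [hyx, mul_assoc]
      _ = ι (w 1 (1 + m)) * ((y ^ m * x) * y) := by
            rw [comm_ypow_w w ι y hy, mul_assoc, mul_assoc]
      _ = ι (w 1 (1 + m)) * (ι (bigW w 1 m) * ((x * y ^ m) * y)) := by
            rw [ih, mul_assoc]
      _ = ι (bigW w 1 (m + 1)) * (x * y ^ (m + 1)) := by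
            rw [hB, map_mul]
            simp only [mul_assoc, pow_succ]
            rw [← mul_assoc, ← map_mul, mul_comm (w 1 (1 + m)), Nat.add_comm 1 m,
              map_mul, mul_assoc]

end Aux

/-- The weight-dependent binomial theorem in `ℂ_w[x,y]`:  given any (noncommutative)
`ℂ`-algebra `R`, a commutative `ℂ`-algebra `A` of weights `w(s,t)` mapped into `R` by `ι`,
and `x, y : R` satisfying `yx = w(1,1)xy`, `x·w(s,t) = w(s+1,t)·x`, `y·w(s,t) = w(s,t+1)·y`,
we have `(x+y)^n = ∑_{k=0}^n [n,k]_w x^k y^{n-k}`. -/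
theorem stmt0 {A R : Type*} [CommRing A] [Algebra ℂ A] [Ring R] [Algebra ℂ R]
    (w : ℕ → ℕ → A) (ι : A →ₐ[ℂ] R) (x y : R)
    (hyx : y * x = ι (w 1 1) * (x * y))
    (hx : ∀ s t : ℕ, x * ι (w s t) = ι (w (s + 1) t) * x)
    (hy : ∀ s t : ℕ, y * ι (w s t) = ι (w s (t + 1)) * y)
    (n : ℕ) :
    (x + y) ^ n = ∑ k ∈ Finset.range (n + 1), ι (wBinom w n k) * x ^ k * y ^ (n - k) := by
  induction n with
  | zero => simp [wBinom]
  | succ n ih =>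
    have hvan : wBinom w n (n + 1) = 0 := wBinom_eq_zero w n (n + 1) (by omega)
    have hX : ∀ k ∈ Finset.range (n + 1),
        (ι (wBinom w n k) * x ^ k * y ^ (n - k)) * x
          = ι (wBinom w n k * bigW w (k + 1) (n - k)) * x ^ (k + 1) * y ^ (n - k) := by
      intro k hk
      simp only [map_mul, mul_assoc]
      rw [comm_ypow_x w ι x y hyx hy, comm_xpow w ι x hx, ← mul_assoc (x ^ k) x,
        ← pow_succ, Nat.add_comm 1 k]
    have hY : ∀ k ∈ Finset.range (n + 1),
        (ι (wBinom w n k) * x ^ k * y ^ (n - k)) * y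
          = ι (wBinom w n k) * x ^ k * y ^ (n + 1 - k) := by
      intro k hk
      have hk' : k ≤ n := by simpa using Nat.lt_succ_iff.mp (Finset.mem_range.mp hk)
      have h : n + 1 - k = (n - k) + 1 := by omega
      rw [h, pow_succ]
      exact mul_assoc _ _ _
    have hL : (x + y) ^ (n + 1)
        = (∑ k ∈ Finset.range (n + 1),
            ι (wBinom w n k * bigW w (k + 1) (n - k)) * x ^ (k + 1) * y ^ (n - k))
          + ∑ k ∈ Finset.range (n + 1), ι (wBinom w n k) * x ^ k * y ^ (n + 1 - k) := by
      rw [pow_succ, ih, mul_add, Finset.sum_mul, Finset.sum_mul,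
        Finset.sum_congr rfl hX, Finset.sum_congr rfl hY]
    rw [hL,
      Finset.sum_range_succ' (fun k => ι (wBinom w n k) * x ^ k * y ^ (n + 1 - k)) n,
      Finset.sum_range_succ' (fun k => ι (wBinom w (n + 1) k) * x ^ k * y ^ (n + 1 - k)) (n + 1)]
    have hrec : ∀ k, wBinom w (n + 1) (k + 1)
        = wBinom w n (k + 1) + wBinom w n k * bigW w (k + 1) (n - k) := fun k => rfl
    have hrec0 : wBinom w (n + 1) 0 = wBinom w n 0 := rfl
    simp only [hrec, hrec0, Nat.succ_sub_succ, Nat.sub_zero, map_add, add_mul,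
      Finset.sum_add_distrib]
    rw [Finset.sum_range_succ (fun k => ι (wBinom w n (k + 1)) * x ^ (k + 1) * y ^ (n - k)) n,
      hvan]
    simp only [map_zero, zero_mul, add_zero]
    abel
end

section
/- In the algebra ℂ_{0,b;q}[x,y] with relations yx = q(1-bq)/(1-bq³)·xy, xb = q²bx, yb = qby, the (b;q)-binomial theorem holds: (x+y)^n = Σ_{k=0}^n [n choose k]_{0,b;q} x^k y^{n-k}, where [n choose k]_{0,b;q} = (q^{1+k}, bq^{1+k}; q)_{n-k} / (q, bq^{1+2k}; q)_{n-k}. -/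
/-!
Left multiplication by `x` or `y` moves past a scalar at the cost of the shift `σ : b ↦ bq²` or
`τ : b ↦ bq`, and `y x^k = d_k x^k y` with `d_k = q^k (1 - bq) / (1 - bq^{2k+1})`. Hence, writing
`(x + y)^{n+1} = (x + y) (x + y)^n`, the coefficients `C_{k,j}` of `x^k y^j` obey the Pascal-type
recurrence `C_{k+1,j+1} = σ C_{k,j+1} + τ C_{k+1,j} · d_{k+1}` with boundary values `1`, and the
closed form satisfies this recurrence by a rational-function identity.
-/

/-- The `q`-shifted factorial `(a;q)_n = ∏_{j=0}^{n-1} (1 - a q^j)`. -/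
def qPoch {K : Type*} [Field K] (a q : K) (n : ℕ) : K :=
  ∏ j ∈ Finset.range n, (1 - a * q ^ j)

section QPochhammer

variable {K L : Type*} [Field K] [Field L]

theorem qPoch_succ (a q : K) (n : ℕ) : qPoch a q (n + 1) = qPoch a q n * (1 - a * q ^ n) :=
  Finset.prod_range_succ _ _

theorem qPoch_succ' (a q : K) (n : ℕ) : qPoch a q (n + 1) = (1 - a) * qPoch (a * q) q n := by
  simp only [qPoch, Finset.prod_range_succ', pow_zero, mul_one, mul_assoc, ← pow_succ']
  exact mul_comm _ _

theorem map_qPoch (φ : K →+* L) (a q : K) (n : ℕ) :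
    φ (qPoch a q n) = qPoch (φ a) (φ q) n := by
  simp [qPoch, map_prod]

theorem qPoch_self_ne_zero {q : K} (hq : ∀ m : ℕ, q ^ (m + 1) ≠ 1) (n : ℕ) :
    qPoch q q n ≠ 0 :=
  Finset.prod_ne_zero_iff.mpr fun m _ ↦ by rw [← pow_succ']; exact sub_ne_zero.mpr (hq m).symm

theorem qPoch_mul_pow_ne_zero {b q : K} (hb : ∀ m : ℕ, 1 - b * q ^ m ≠ 0) (m n : ℕ) :
    qPoch (b * q ^ m) q n ≠ 0 :=
  Finset.prod_ne_zero_iff.mpr fun i _ ↦ by rw [mul_assoc, ← pow_add]; exact hb (m + i)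

end QPochhammer

section Skew

variable {K R : Type*} [Semiring K] [Semiring R] (ι : K →+* R) (σ τ : K →+* K) {x y : R}

theorem mul_pow_eq_of_mul_eq {c : K} {d : ℕ → K} (hd0 : d 0 = 1)
    (hd : ∀ k, d (k + 1) = c * σ (d k)) (hx : ∀ f : K, x * ι f = ι (σ f) * x)
    (hyx : y * x = ι c * (x * y)) (k : ℕ) :
    y * x ^ k = ι (d k) * (x ^ k * y) := by
  induction k with
  | zero => simp [hd0]
  | succ k ih =>
    calc y * x ^ (k + 1) = ι c * (x * (y * x ^ k)) := by
          rw [pow_succ', ← mul_assoc, hyx]; simp only [mul_assoc]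
      _ = ι (d (k + 1)) * (x ^ (k + 1) * y) := by
          rw [ih, ← mul_assoc x, hx, hd, map_mul, pow_succ']; simp only [mul_assoc]

theorem add_pow_eq_sum_of_pascal {d : ℕ → K} {C : ℕ → ℕ → K}
    (hx : ∀ f : K, x * ι f = ι (σ f) * x) (hy : ∀ f : K, y * ι f = ι (τ f) * y)
    (hyxk : ∀ k, y * x ^ k = ι (d k) * (x ^ k * y)) (hd0 : d 0 = 1)
    (hC0j : ∀ j, C 0 j = 1) (hCk0 : ∀ k, C k 0 = 1)
    (hC : ∀ k j, C (k + 1) (j + 1) = σ (C k (j + 1)) + τ (C (k + 1) j) * d (k + 1)) (n : ℕ) :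
    (x + y) ^ n = ∑ k ∈ Finset.range (n + 1), ι (C k (n - k)) * x ^ k * y ^ (n - k) := by
  have hxmul : ∀ c k j, x * (ι c * x ^ k * y ^ j) = ι (σ c) * x ^ (k + 1) * y ^ j := by
    intro c k j
    rw [pow_succ', ← mul_assoc, ← mul_assoc, hx]; simp only [mul_assoc]
  have hymul : ∀ c k j, y * (ι c * x ^ k * y ^ j) = ι (τ c * d k) * x ^ k * y ^ (j + 1) := by
    intro c k j
    rw [← mul_assoc, ← mul_assoc, hy, mul_assoc _ y, hyxk, map_mul, pow_succ']
    simp only [mul_assoc]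
  induction n with
  | zero => simp [hC0j]
  | succ n ih =>
    set A := fun k ↦ ι (σ (C k (n - k))) * x ^ (k + 1) * y ^ (n - k)
    set B := fun k ↦ ι (τ (C k (n - k)) * d k) * x ^ k * y ^ (n - k + 1)
    have hstep : (x + y) ^ (n + 1) =
        ∑ k ∈ Finset.range (n + 1), A k + ∑ k ∈ Finset.range (n + 1), B k := by
      rw [pow_succ', ih, add_mul, Finset.mul_sum, Finset.mul_sum]
      simp only [hxmul, hymul, A, B]
    have hmid : ∀ k ∈ Finset.range n, ι (C (k + 1) (n + 1 - (k + 1))) * x ^ (k + 1) *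
        y ^ (n + 1 - (k + 1)) = A k + B (k + 1) := by
      intro k hk
      obtain ⟨j, hj⟩ : ∃ j, n - k = j + 1 := ⟨n - k - 1, by grind⟩
      have hj' : n - (k + 1) = j := by omega
      simp only [A, B, Nat.add_sub_add_right, hj, hj', hC, map_add, add_mul]
    rw [hstep, Finset.sum_range_succ A, Finset.sum_range_succ' B]
    conv_rhs => rw [Finset.sum_range_succ', Finset.sum_range_succ, Finset.sum_congr rfl hmid,
      Finset.sum_add_distrib]
    simp only [A, B, Nat.sub_self, Nat.sub_zero, hC0j, hCk0, hd0, map_one, one_mul]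
    abel

end Skew

section BQBinomial

variable {K L : Type*} [Field K] [Field L]

/-- `bqBinomial b q k j` is the `(b;q)`-binomial coefficient `[k + j choose k]_{0,b;q}`. -/
def bqBinomial (b q : K) (k j : ℕ) : K :=
  qPoch (q ^ (k + 1)) q j * qPoch (b * q ^ (k + 1)) q j /
    (qPoch q q j * qPoch (b * q ^ (2 * k + 1)) q j)

/-- The coefficient in `y x^k = bqSkew b q k · x^k y`. -/
def bqSkew (b q : K) (k : ℕ) : K := q ^ k * (1 - b * q) / (1 - b * q ^ (2 * k + 1))

theorem map_bqBinomial (φ : K →+* L) (b q : K) (k j : ℕ) :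
    φ (bqBinomial b q k j) = bqBinomial (φ b) (φ q) k j := by
  simp [bqBinomial, map_qPoch]

theorem map_bqSkew (φ : K →+* L) (b q : K) (k : ℕ) :
    φ (bqSkew b q k) = bqSkew (φ b) (φ q) k := by
  simp [bqSkew]

variable {b q : K}

theorem bqBinomial_zero_right (k : ℕ) : bqBinomial b q k 0 = 1 := by
  simp [bqBinomial, qPoch]

theorem bqBinomial_zero_left (hq : ∀ m : ℕ, q ^ (m + 1) ≠ 1)
    (hb : ∀ m : ℕ, 1 - b * q ^ m ≠ 0) (j : ℕ) : bqBinomial b q 0 j = 1 := by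
  simp only [bqBinomial, zero_add, pow_one, mul_zero]
  exact div_self <|
    mul_ne_zero (qPoch_self_ne_zero hq j) (by simpa using qPoch_mul_pow_ne_zero hb 1 j)

theorem bqSkew_zero (hb : 1 - b * q ≠ 0) : bqSkew b q 0 = 1 := by
  simp [bqSkew, hb]

theorem bqSkew_one : bqSkew b q 1 = q * (1 - b * q) / (1 - b * q ^ 3) := by
  simp [bqSkew]

theorem bqSkew_succ (hb : ∀ m : ℕ, 1 - b * q ^ m ≠ 0) (k : ℕ) :
    bqSkew b q (k + 1) = bqSkew b q 1 * bqSkew (b * q ^ 2) q k := by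
  have h3 := hb 3
  have h := hb (2 * k + 3)
  have e1 : b * q ^ (2 * (k + 1) + 1) = b * q ^ (2 * k + 3) := by ring
  have e2 : b * q ^ 2 * q ^ (2 * k + 1) = b * q ^ (2 * k + 3) := by ring
  have e3 : b * q ^ 2 * q = b * q ^ 3 := by ring
  simp only [bqSkew, e1, e2, e3, mul_one, Nat.reduceAdd]
  field_simp
  ring

theorem bqBinomial_succ_succ (hq : ∀ m : ℕ, q ^ (m + 1) ≠ 1)
    (hb : ∀ m : ℕ, 1 - b * q ^ m ≠ 0) (k j : ℕ) :
    bqBinomial b q (k + 1) (j + 1) =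
      bqBinomial (b * q ^ 2) q k (j + 1) + bqBinomial (b * q) q (k + 1) j * bqSkew b q (k + 1) := by
  have e1 : b * q ^ 2 * q ^ (k + 1) = b * q ^ (k + 3) := by ring
  have e2 : b * q ^ 2 * q ^ (2 * k + 1) = b * q ^ (2 * k + 3) := by ring
  have e3 : b * q * q ^ (k + 1 + 1) = b * q ^ (k + 3) := by ring
  have e4 : b * q * q ^ (2 * (k + 1) + 1) = b * q ^ (2 * k + 4) := by ring
  have e5 : b * q ^ (k + 1 + 1) = b * q ^ (k + 2) := by ring
  have e6 : b * q ^ (2 * (k + 1) + 1) = b * q ^ (2 * k + 3) := by ring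
  simp only [bqBinomial, bqSkew, e1, e2, e3, e4, e5, e6]
  -- Peeling one factor off each `(j+1)`-fold product leaves a rational identity in the four
  -- products `(q^{k+2}, bq^{k+3}, q, bq^{2k+4}; q)_j`.
  rw [qPoch_succ (q ^ (k + 1 + 1)) q j, qPoch_succ' (b * q ^ (k + 2)) q j,
    qPoch_succ' (q ^ (k + 1)) q j, qPoch_succ (b * q ^ (k + 3)) q j,
    qPoch_succ q q j, qPoch_succ' (b * q ^ (2 * k + 3)) q j]
  have f1 : b * q ^ (k + 2) * q = b * q ^ (k + 3) := by ring
  have f2 : q ^ (k + 1) * q = q ^ (k + 1 + 1) := by ring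
  have f3 : b * q ^ (2 * k + 3) * q = b * q ^ (2 * k + 4) := by ring
  rw [f1, f2, f3]
  have h1 := qPoch_self_ne_zero hq j
  have h2 := qPoch_mul_pow_ne_zero hb (2 * k + 4) j
  have h3 : 1 - q ^ j * q ≠ 0 := by rw [← pow_succ]; exact sub_ne_zero.mpr (hq j).symm
  have h4 := hb (2 * k + 3)
  field_simp
  ring

end BQBinomial

theorem stmt7_general {K R : Type*} [Field K] [Ring R] (b q : K) (ι : K →+* R) (x y : R)
    (σ τ : K →+* K)
    (hσb : σ b = b * q ^ 2) (hσq : σ q = q)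
    (hτb : τ b = b * q) (hτq : τ q = q)
    (hx : ∀ f : K, x * ι f = ι (σ f) * x)
    (hy : ∀ f : K, y * ι f = ι (τ f) * y)
    (hq1 : ∀ m : ℕ, q ^ (m + 1) ≠ 1)
    (hbq : ∀ m : ℤ, 1 - b * q ^ m ≠ 0)
    (hyx : y * x = ι (q * (1 - b * q) / (1 - b * q ^ 3)) * (x * y))
    (n : ℕ) :
    (x + y) ^ n = ∑ k ∈ Finset.range (n + 1),
      ι (qPoch (q ^ (k + 1)) q (n - k) * qPoch (b * q ^ (k + 1)) q (n - k) /
          (qPoch q q (n - k) * qPoch (b * q ^ (2 * k + 1)) q (n - k))) *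
        x ^ k * y ^ (n - k) := by
  have hb : ∀ m : ℕ, 1 - b * q ^ m ≠ 0 := fun m ↦ mod_cast hbq m
  have hskew0 : bqSkew b q 0 = 1 := bqSkew_zero (by simpa using hb 1)
  have hskew : ∀ k, y * x ^ k = ι (bqSkew b q k) * (x ^ k * y) :=
    mul_pow_eq_of_mul_eq ι σ hskew0 (fun k ↦ by rw [map_bqSkew, hσb, hσq, bqSkew_succ hb]) hx
      (by rwa [bqSkew_one])
  refine add_pow_eq_sum_of_pascal ι σ τ hx hy hskew hskew0
    (bqBinomial_zero_left hq1 hb) bqBinomial_zero_right (fun k j ↦ ?_) n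
  rw [map_bqBinomial, map_bqBinomial, hσb, hσq, hτb, hτq, bqBinomial_succ_succ hq1 hb]

/-- The `(b;q)`-binomial theorem in `ℂ_{0,b;q}[x,y]`: for a field `K` of coefficients
(rational functions of `b`, `q`), a ring `R`, `ι : K →+* R`, elements `x, y : R` and shift
endomorphisms `σ` (with `σ(b) = bq²`, `σ(q) = q`) and `τ` (with `τ(b) = bq`, `τ(q) = q`)
realizing the relations `yx = q(1-bq)/(1-bq³)·xy`, `x·f(b) = f(bq²)·x`, `y·f(b) = f(bq)·y`,
one has `(x+y)^n = ∑_{k=0}^n [n,k]_{0,b;q} x^k y^{n-k}` where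
`[n,k]_{0,b;q} = (q^{1+k}, bq^{1+k};q)_{n-k} / (q, bq^{1+2k};q)_{n-k}`. -/
theorem stmt7 {K R : Type*} [Field K] [Ring R] (b q : K) (ι : K →+* R) (x y : R)
    (σ τ : K →+* K)
    (hσb : σ b = b * q ^ 2) (hσq : σ q = q)
    (hτb : τ b = b * q) (hτq : τ q = q)
    (hx : ∀ f : K, x * ι f = ι (σ f) * x)
    (hy : ∀ f : K, y * ι f = ι (τ f) * y)
    (hq0 : q ≠ 0) (hq1 : ∀ m : ℕ, q ^ (m + 1) ≠ 1)
    (hbq : ∀ m : ℤ, 1 - b * q ^ m ≠ 0)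
    (hyx : y * x = ι (q * (1 - b * q) / (1 - b * q ^ 3)) * (x * y))
    (n : ℕ) :
    (x + y) ^ n = ∑ k ∈ Finset.range (n + 1),
      ι (qPoch (q ^ (k + 1)) q (n - k) * qPoch (b * q ^ (k + 1)) q (n - k) /
          (qPoch q q (n - k) * qPoch (b * q ^ (2 * k + 1)) q (n - k))) *
        x ^ k * y ^ (n - k) :=
  stmt7_general b q ι x y σ τ hσb hσq hτb hτq hx hy hq1 hbq hyx n
end

section
/- In ℂ_{0,b;q}[x,y], for all k, l ∈ ℕ₀ one has the commutation identity x^l y^k = [(bq^{1+k}; q)_{2l} / (bq; q)_{2l}] · q^{-kl} · y^k x^l. -/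
private lemma stmt8_aux {R : Type*} [Ring R] (A B u v w : R) :
    A * ((B * (u * v)) * w) = (A * B) * (u * (v * w)) := by noncomm_ring

/-- In `ℂ_{0,b;q}[x,y]` (with relations `yx = q(1-bq)/(1-bq³)·xy`, `x·f(b) = f(bq²)·x`,
`y·f(b) = f(bq)·y`), one has
`x^l y^k = [(bq^{1+k};q)_{2l} / (bq;q)_{2l}] · q^{-kl} · y^k x^l` for all `k, l ∈ ℕ₀`. -/
theorem stmt8 {K R : Type*} [Field K] [Ring R] (b q : K) (ι : K →+* R) (x y : R)
    (σ τ : K →+* K)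
    (hσb : σ b = b * q ^ 2) (hσq : σ q = q)
    (hτb : τ b = b * q) (hτq : τ q = q)
    (hx : ∀ f : K, x * ι f = ι (σ f) * x)
    (hy : ∀ f : K, y * ι f = ι (τ f) * y)
    (hq0 : q ≠ 0) (hq1 : ∀ m : ℕ, q ^ (m + 1) ≠ 1)
    (hbq : ∀ m : ℤ, 1 - b * q ^ m ≠ 0)
    (hyx : y * x = ι (q * (1 - b * q) / (1 - b * q ^ 3)) * (x * y))
    (k l : ℕ) :
    x ^ l * y ^ k =
      ι (qPoch (b * q ^ (k + 1)) q (2 * l) / qPoch (b * q) q (2 * l) *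
          q ^ (-((k : ℤ) * l))) * (y ^ k * x ^ l) := by
  -- natural-exponent nonvanishing
  have hbqn : ∀ m : ℕ, 1 - b * q ^ m ≠ 0 := by
    intro m
    have := hbq (m : ℤ)
    simpa [zpow_natCast] using this
  set d : ℕ → K := fun j => (1 - b * q ^ (j + 3)) / (q * (1 - b * q ^ (j + 1))) with hd
  set g : ℕ → ℕ → K := fun m i =>
    ((1 - b * q ^ (m + 1 + 2 * i)) * (1 - b * q ^ (m + 2 + 2 * i))) /
      (q ^ m * ((1 - b * q ^ (1 + 2 * i)) * (1 - b * q ^ (2 + 2 * i)))) with hg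
  have h1 : 1 - b * q ≠ 0 := by simpa using hbqn 1
  have h2 : 1 - b * q ^ 2 ≠ 0 := hbqn 2
  have h3 : 1 - b * q ^ 3 ≠ 0 := hbqn 3
  -- x y = ι (d 0) (y x)
  have hxy : x * y = ι (d 0) * (y * x) := by
    rw [hyx, ← mul_assoc, ← map_mul]
    have hd0 : d 0 = (1 - b * q ^ 3) / (q * (1 - b * q)) := by simp [hd]
    have hone : d 0 * (q * (1 - b * q) / (1 - b * q ^ 3)) = 1 := by
      rw [hd0, div_mul_div_comm, div_eq_one_iff_eq
        (mul_ne_zero (mul_ne_zero hq0 h1) h3)]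
      ring
    rw [hone, map_one, one_mul]
  -- τ acts on d
  have hτd : ∀ j, τ (d j) = d (j + 1) := by
    intro j
    simp only [hd, map_div₀, map_mul, map_sub, map_one, map_pow, hτb, hτq]
    congr 1 <;> ring
  -- σ acts on g
  have hσg : ∀ m i, σ (g m i) = g m (i + 1) := by
    intro m i
    simp only [hg, map_div₀, map_mul, map_sub, map_one, map_pow, hσb, hσq]
    congr 1 <;> ring
  -- moving x past y^k
  have hA : ∀ n : ℕ, x * y ^ n = ι (∏ j ∈ Finset.range n, d j) * (y ^ n * x) := by
    intro n
    induction n with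
    | zero => simp
    | succ n ih =>
      have step : x * y ^ (n + 1) = ι (d 0) * (ι (τ (∏ j ∈ Finset.range n, d j)) *
          (y ^ (n + 1) * x)) := by
        calc x * y ^ (n + 1) = (x * y) * y ^ n := by rw [pow_succ']; noncomm_ring
          _ = ι (d 0) * (y * (x * y ^ n)) := by rw [hxy]; noncomm_ring
          _ = ι (d 0) * (y * (ι (∏ j ∈ Finset.range n, d j) * (y ^ n * x))) := by rw [ih]
          _ = ι (d 0) * ((y * ι (∏ j ∈ Finset.range n, d j)) * (y ^ n * x)) := by
              noncomm_ring
          _ = ι (d 0) * (ι (τ (∏ j ∈ Finset.range n, d j)) * (y * (y ^ n * x))) := by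
              rw [hy]; noncomm_ring
          _ = ι (d 0) * (ι (τ (∏ j ∈ Finset.range n, d j)) * (y ^ (n + 1) * x)) := by
              rw [pow_succ']; noncomm_ring
      rw [step, ← mul_assoc, ← map_mul]
      congr 2
      rw [map_prod]
      simp only [hτd]
      rw [Finset.prod_range_succ']
      ring
  -- the product of d's telescopes to g k 0
  have hB : ∀ m : ℕ, (∏ j ∈ Finset.range m, d j) = g m 0 := by
    intro m
    induction m with
    | zero =>
      simp only [Finset.range_zero, Finset.prod_empty, hg]
      rw [eq_comm, div_eq_one_iff_eq (by
        simpa using mul_ne_zero (mul_ne_zero one_ne_zero (hbqn (1 + 2 * 0))) (hbqn (2 + 2 * 0)))]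
      ring
    | succ m ih =>
      rw [Finset.prod_range_succ, ih]
      simp only [hg, hd]
      have h4 := hbqn (m + 1)
      have h5 := hbqn (m + 2)
      have h6 := hbqn (m + 3)
      have e1 : (1 : K) - b * q ^ (1 + 2 * 0) ≠ 0 := by simpa using h1
      have e2 : (1 : K) - b * q ^ (2 + 2 * 0) ≠ 0 := by simpa using h2
      rw [div_mul_div_comm, div_eq_div_iff
        (mul_ne_zero (mul_ne_zero (pow_ne_zero m hq0) (mul_ne_zero e1 e2)) (mul_ne_zero hq0 h4))
        (mul_ne_zero (pow_ne_zero (m + 1) hq0) (mul_ne_zero e1 e2))]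
      ring
  -- main commutation with C k l = ∏ g k i
  have hC : ∀ n : ℕ, x ^ n * y ^ k = ι (∏ i ∈ Finset.range n, g k i) * (y ^ k * x ^ n) := by
    intro n
    induction n with
    | zero => simp
    | succ n ih =>
      calc x ^ (n + 1) * y ^ k = x * (x ^ n * y ^ k) := by rw [pow_succ']; noncomm_ring
        _ = x * (ι (∏ i ∈ Finset.range n, g k i) * (y ^ k * x ^ n)) := by rw [ih]
        _ = (x * ι (∏ i ∈ Finset.range n, g k i)) * (y ^ k * x ^ n) := by noncomm_ring
        _ = ι (σ (∏ i ∈ Finset.range n, g k i)) * ((x * y ^ k) * x ^ n) := by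
            rw [hx]; noncomm_ring
        _ = ι (σ (∏ i ∈ Finset.range n, g k i)) *
              ((ι (∏ j ∈ Finset.range k, d j) * (y ^ k * x)) * x ^ n) := by rw [hA]
        _ = (ι (σ (∏ i ∈ Finset.range n, g k i)) * ι (∏ j ∈ Finset.range k, d j)) *
              (y ^ k * x ^ (n + 1)) := by rw [pow_succ']; exact stmt8_aux _ _ _ _ _
        _ = ι (∏ i ∈ Finset.range (n + 1), g k i) * (y ^ k * x ^ (n + 1)) := by
            rw [← map_mul]
            congr 1
            rw [hB, map_prod]
            simp only [hσg]
            rw [Finset.prod_range_succ']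
  -- the scalar identity
  have hkey : ∀ n : ℕ, (∏ i ∈ Finset.range n, g k i) * qPoch (b * q) q (2 * n) * q ^ (k * n) =
      qPoch (b * q ^ (k + 1)) q (2 * n) := by
    intro n
    induction n with
    | zero => simp [qPoch]
    | succ n ih =>
      have h2n : 2 * (n + 1) = (2 * n + 1) + 1 := by ring
      rw [Finset.prod_range_succ, h2n]
      simp only [qPoch, Finset.prod_range_succ] at ih ⊢
      have e1 := hbqn (1 + 2 * n)
      have e2 := hbqn (2 + 2 * n)
      have hqk : (q : K) ^ k ≠ 0 := pow_ne_zero _ hq0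
      calc (∏ i ∈ Finset.range n, g k i) * g k n *
            ((∏ j ∈ Finset.range (2 * n), (1 - b * q * q ^ j)) *
              (1 - b * q * q ^ (2 * n)) * (1 - b * q * q ^ (2 * n + 1))) * q ^ (k * (n + 1))
          = ((∏ i ∈ Finset.range n, g k i) *
              (∏ j ∈ Finset.range (2 * n), (1 - b * q * q ^ j)) * q ^ (k * n)) *
            (g k n * ((1 - b * q * q ^ (2 * n)) * (1 - b * q * q ^ (2 * n + 1))) * q ^ k) := by
            ring
        _ = (∏ j ∈ Finset.range (2 * n), (1 - b * q ^ (k + 1) * q ^ j)) *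
            ((1 - b * q ^ (k + 1) * q ^ (2 * n)) * (1 - b * q ^ (k + 1) * q ^ (2 * n + 1))) := by
            rw [ih]
            congr 1
            simp only [hg]
            rw [div_mul_eq_mul_div, div_mul_eq_mul_div, div_eq_iff
              (mul_ne_zero hqk (mul_ne_zero e1 e2))]
            ring
        _ = _ := by ring
  -- conclude
  rw [hC l]
  congr 2
  have hpd : qPoch (b * q) q (2 * l) ≠ 0 := by
    unfold qPoch
    refine Finset.prod_ne_zero_iff.mpr fun j _ => ?_
    have h := hbqn (j + 1)
    intro hc
    apply h
    rw [← hc]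
    ring
  have hql : (q : K) ^ (k * l) ≠ 0 := pow_ne_zero _ hq0
  have hz : q ^ (-((k : ℤ) * l)) = (q ^ (k * l))⁻¹ := by
    rw [← zpow_natCast q (k * l), ← zpow_neg]
    congr 1
  rw [hz, div_mul_eq_mul_div, eq_div_iff hpd, ← hkey l, mul_assoc, mul_inv_cancel₀ hql,
    mul_one]
end

section
/- Define elliptic Fibonacci numbers by S₀ = 0, S₁ = 1, and S_n(a,b;q,p) = S_{n-1}(aq,bq²;q,p) + [θ(aq^{1+n},aq^{2+n},bq⁵,aq^{1-n}/b,aq^{-n}/b;p)/θ(aq³,aq⁴,bq^{1+2n},a/(bq),a/(bq²);p)]·q^{n-2}·S_{n-2}(aq²,bq⁴;q,p) for n ≥ 2. Let x satisfy x·f(a,b) = f(aq,bq²)·x and let η_{a,b;q,p}(c(a,b)x^n) = c(a,b)·[θ(aq^{1+n},aq^{2+n},bq,aq^{1-n}/b,aq^{-n}/b;p)/θ(aq,aq²,bq^{1+2n},aq/b,a/b;p)]q^n x^n. Then, as formal power series, (1 − x − x²·η_{a,b;q,p}) · (Σ_{n≥0} S_n(a,b;q,p)x^n) = x; equivalently Σ_{n≥0}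 S_n(a,b;q,p)x^n = (1 − x − x²η_{a,b;q,p})^{-1}x. -/
/-!
Compare coefficients of `x^n`. Moving `x²` to the left of `η` shifts `a ↦ aq²`, `b ↦ bq⁴`,
and under this shift the weight of `η` on `x^{n-2}` becomes exactly the coefficient of
`S_{n-2}(aq², bq⁴)` in the recurrence: the arguments `aq^k/b` of the theta functions only
change by `q²/q⁴ = q⁻²`. So for `n ≥ 2` the coefficient of `x^n` is the recurrence itself,
and the coefficients of `x⁰`, `x¹` are `S₀ = 0` and `S₁ = 1`.
-/

noncomputable def theta (x p : ℂ) : ℂ :=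
  ∏' j : ℕ, ((1 - p ^ j * x) * (1 - p ^ (j + 1) / x))

/- Formal power series in the noncommuting variable `x` (which shifts `a ↦ aq`, `b ↦ bq²`)
are modelled by functions `m : ℕ → ℤ → ℤ → ℂ`, where `m n i j` is the coefficient
`c_n(aq^i, bq^j)` of `x^n`. -/

def opX (m : ℕ → ℤ → ℤ → ℂ) : ℕ → ℤ → ℤ → ℂ
  | 0, _, _ => 0
  | n + 1, i, j => m n (i + 1) (j + 2)

noncomputable def opEta (a b q p : ℂ) (m : ℕ → ℤ → ℤ → ℂ) : ℕ → ℤ → ℤ → ℂ :=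
  fun n i j =>
    m n i j *
      (theta (a * q ^ (i + 1 + (n : ℤ))) p * theta (a * q ^ (i + 2 + (n : ℤ))) p *
        theta (b * q ^ (j + 1)) p * theta (a * q ^ (i + 1 - (n : ℤ)) / (b * q ^ j)) p *
        theta (a * q ^ (i - (n : ℤ)) / (b * q ^ j)) p) /
      (theta (a * q ^ (i + 1)) p * theta (a * q ^ (i + 2)) p *
        theta (b * q ^ (j + 1 + 2 * (n : ℤ))) p * theta (a * q ^ (i + 1) / (b * q ^ j)) p *
        theta (a * q ^ i / (b * q ^ j)) p) * q ^ (n : ℤ)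

section EllipticFibonacci

variable (a b q p : ℂ)

noncomputable def etaWeight (n : ℕ) (i j : ℤ) : ℂ :=
  (theta (a * q ^ (i + 1 + (n : ℤ))) p * theta (a * q ^ (i + 2 + (n : ℤ))) p *
      theta (b * q ^ (j + 1)) p * theta (a * q ^ (i + 1 - (n : ℤ)) / (b * q ^ j)) p *
      theta (a * q ^ (i - (n : ℤ)) / (b * q ^ j)) p) /
    (theta (a * q ^ (i + 1)) p * theta (a * q ^ (i + 2)) p *
      theta (b * q ^ (j + 1 + 2 * (n : ℤ))) p * theta (a * q ^ (i + 1) / (b * q ^ j)) p *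
      theta (a * q ^ i / (b * q ^ j)) p) * q ^ (n : ℤ)

noncomputable def fibonacciWeight (n : ℕ) (i j : ℤ) : ℂ :=
  (theta (a * q ^ (i + (n : ℤ) + 3)) p * theta (a * q ^ (i + (n : ℤ) + 4)) p *
      theta (b * q ^ (j + 5)) p * theta (a * q ^ (i - (n : ℤ) - 1) / (b * q ^ j)) p *
      theta (a * q ^ (i - (n : ℤ) - 2) / (b * q ^ j)) p) /
    (theta (a * q ^ (i + 3)) p * theta (a * q ^ (i + 4)) p *
      theta (b * q ^ (j + 2 * (n : ℤ) + 5)) p * theta (a * q ^ (i - 1) / (b * q ^ j)) p *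
      theta (a * q ^ (i - 2) / (b * q ^ j)) p) * q ^ (n : ℤ)

theorem opEta_apply (m : ℕ → ℤ → ℤ → ℂ) (n : ℕ) (i j : ℤ) :
    opEta a b q p m n i j = m n i j * etaWeight a b q p n i j := by
  simp only [opEta, etaWeight]
  ring

theorem opX_opX_add_two (m : ℕ → ℤ → ℤ → ℂ) (n : ℕ) (i j : ℤ) :
    opX (opX m) (n + 2) i j = m n (i + 2) (j + 4) := by
  simp only [opX, add_assoc]
  norm_num

variable {q}

theorem mul_zpow_div_mul_zpow_add (hq : q ≠ 0) (u v k : ℤ) :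
    a * q ^ (u + k) / (b * q ^ (v + k)) = a * q ^ u / (b * q ^ v) := by
  rw [zpow_add₀ hq, zpow_add₀ hq, ← mul_assoc, ← mul_assoc,
    mul_div_mul_right _ _ (zpow_ne_zero k hq)]

theorem etaWeight_add_two_add_four (hq : q ≠ 0) (n : ℕ) (i j : ℤ) :
    etaWeight a b q p n (i + 2) (j + 4) = fibonacciWeight a b q p n i j := by
  have shift (u v : ℤ) : a * q ^ (u + 4) / (b * q ^ (v + 4)) = a * q ^ u / (b * q ^ v) :=
    mul_zpow_div_mul_zpow_add a b hq u v 4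
  simp only [etaWeight, fibonacciWeight]
  rw [show i + 2 + 1 - (n : ℤ) = i - n - 1 + 4 by ring, show i + 2 - (n : ℤ) = i - n - 2 + 4 by ring,
    show i + 2 + 1 = i - 1 + 4 by ring, show i + 2 = i - 2 + 4 by ring, shift, shift, shift, shift]
  ring_nf

end EllipticFibonacci

theorem stmt16_general (a b q p : ℂ) (hq0 : q ≠ 0)
    (S : ℕ → ℤ → ℤ → ℂ)
    (hS0 : ∀ i j : ℤ, S 0 i j = 0)
    (hS1 : ∀ i j : ℤ, S 1 i j = 1)
    (hSrec : ∀ (n : ℕ) (i j : ℤ), S (n + 2) i j =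
      S (n + 1) (i + 1) (j + 2) +
        (theta (a * q ^ (i + (n : ℤ) + 3)) p * theta (a * q ^ (i + (n : ℤ) + 4)) p *
          theta (b * q ^ (j + 5)) p * theta (a * q ^ (i - (n : ℤ) - 1) / (b * q ^ j)) p *
          theta (a * q ^ (i - (n : ℤ) - 2) / (b * q ^ j)) p) /
        (theta (a * q ^ (i + 3)) p * theta (a * q ^ (i + 4)) p *
          theta (b * q ^ (j + 2 * (n : ℤ) + 5)) p * theta (a * q ^ (i - 1) / (b * q ^ j)) p *
          theta (a * q ^ (i - 2) / (b * q ^ j)) p) * q ^ (n : ℤ) *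
        S n (i + 2) (j + 4)) :
    ∀ (n : ℕ) (i j : ℤ),
      S n i j - opX S n i j - opX (opX (opEta a b q p S)) n i j =
        if n = 1 then 1 else 0 := by
  intro n i j
  match n with
  | 0 => simp [opX, hS0]
  | 1 => simp [opX, hS0, hS1]
  | n + 2 =>
    have hrec : S (n + 2) i j = S (n + 1) (i + 1) (j + 2) +
        fibonacciWeight a b q p n i j * S n (i + 2) (j + 4) := hSrec n i j
    rw [opX_opX_add_two, opEta_apply, etaWeight_add_two_add_four a b p hq0, hrec]
    simp only [opX, if_neg (by omega : n + 2 ≠ 1)]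
    ring

/-- The elliptic Fibonacci numbers, given by `S₀ = 0`, `S₁ = 1`, and
`S_n(a,b) = S_{n-1}(aq, bq²) + [θ(aq^{1+n},aq^{2+n},bq⁵,aq^{1-n}/b,aq^{-n}/b;p)/
θ(aq³,aq⁴,bq^{1+2n},a/(bq),a/(bq²);p)]·q^{n-2}·S_{n-2}(aq², bq⁴)`, satisfy
`(1 − x − x²·η_{a,b;q,p})·(∑_{n≥0} S_n(a,b)x^n) = x` coefficientwise; here
`S n i j` denotes `S_n(aq^i, bq^j)`. -/
theorem stmt16 (a b q p : ℂ) (hp : ‖p‖ < 1) (hq0 : q ≠ 0)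
    (S : ℕ → ℤ → ℤ → ℂ)
    (hS0 : ∀ i j : ℤ, S 0 i j = 0)
    (hS1 : ∀ i j : ℤ, S 1 i j = 1)
    (hSrec : ∀ (n : ℕ) (i j : ℤ), S (n + 2) i j =
      S (n + 1) (i + 1) (j + 2) +
        (theta (a * q ^ (i + (n : ℤ) + 3)) p * theta (a * q ^ (i + (n : ℤ) + 4)) p *
          theta (b * q ^ (j + 5)) p * theta (a * q ^ (i - (n : ℤ) - 1) / (b * q ^ j)) p *
          theta (a * q ^ (i - (n : ℤ) - 2) / (b * q ^ j)) p) /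
        (theta (a * q ^ (i + 3)) p * theta (a * q ^ (i + 4)) p *
          theta (b * q ^ (j + 2 * (n : ℤ) + 5)) p * theta (a * q ^ (i - 1) / (b * q ^ j)) p *
          theta (a * q ^ (i - 2) / (b * q ^ j)) p) * q ^ (n : ℤ) *
        S n (i + 2) (j + 4)) :
    ∀ (n : ℕ) (i j : ℤ),
      S n i j - opX S n i j - opX (opX (opEta a b q p S)) n i j =
        if n = 1 then 1 else 0 :=
  stmt16_general a b q p hq0 S hS0 hS1 hSrec
end

section
/- Let (w(s,t)) be doubly-indexed indeterminates and let x, y satisfy yx = w(1,1)xy + 1, x·w(s,t) = w(s+1,t)·x, y·w(s,t) = w(s,t+1)·y. For a word α in x, y with m x's and n y's, let B_α be the Ferrers board outlined by α (x = east step, y = north step), and define the weighted rook polynomial r_k(w; B) = Σ_{P ∈ 𝒩_k(B)} ∏_{(s,t) ∈ U_B(P)} w(s − r_{P,(s,t)}, t), where 𝒩_k(B) is the set of placements of k nonattacking rooks on B, U_B(P) is the set of cells of B not containing a rook and not cancelled by any rook (a rook cancels all cells to its right in its row and all cells below it in its column), and r_{P,(s,t)} is the number of rooks strictly north-west of (s,t).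 Then the normally ordered form of α is α = Σ_{k=0}^{min(m,n)} r_k(w; B_α) x^{m-k} y^{n-k}. -/
/-!
Induction on the word, reading its first letter. Prepending `x` shifts the board one column to
the right, while moving `x` across a weight raises its first index by one; since the number of
rooks north-west of a cell never exceeds its column, the two shifts agree. Prepending `y`
lifts the board by one row and puts a full bottom row of length `m` underneath; moving `y`
across a weight raises its second index, and
`y x^p = w(1,1)⋯w(p,1) x^p y + ∑_{q<p} w(1,1)⋯w(q,1) x^(p-1)`.
For a placement `P` on the old board with `p = m - #P` free columns, the first term accounts
for `P` lifted, with the whole free part of the bottom row uncancelled, and the `q`-th term for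
`P` lifted plus a rook in the `(q+1)`-st free column of the bottom row, which leaves only the
`q` free cells to its left uncancelled.
-/

/-- The column heights of the Ferrers board outlined by a word (`true` = east step `x`,
`false` = north step `y`): the height of the `i`-th column is the number of `y`'s
preceding the `i`-th `x`. The second argument accumulates the number of `y`'s read so far. -/
def colHeights : List Bool → ℕ → List ℕ
  | [], _ => []
  | true :: r, t => t :: colHeights r t
  | false :: r, t => colHeights r (t + 1)

/-- The Ferrers board `B_α` outlined by the word `α`, as a finite set of cells `(i,j)`
(column `i ≥ 1` from the left, row `j ≥ 1` from the bottom, `j` at most the height of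
column `i`). -/
def boardOf (α : List Bool) : Finset (ℕ × ℕ) :=
  ((Finset.range α.length ×ˢ Finset.range α.length).filter
    (fun c => c.2 < (colHeights α 0).getD c.1 0)).image (fun c => (c.1 + 1, c.2 + 1))

/-- The set `𝒩_k(B)` of placements of `k` nonattacking rooks on the board `B` (no two
rooks in the same row or column). -/
def placements (B : Finset (ℕ × ℕ)) (k : ℕ) : Finset (Finset (ℕ × ℕ)) :=
  B.powerset.filter (fun P => P.card = k ∧
    ∀ c ∈ P, ∀ d ∈ P, c ≠ d → c.1 ≠ d.1 ∧ c.2 ≠ d.2)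

/-- The set `U_B(P)` of cells of `B` not containing a rook of `P` and not cancelled by any
rook of `P`: a rook cancels all cells strictly to its right in its row and all cells
strictly below it in its column. -/
def uncancelled (B P : Finset (ℕ × ℕ)) : Finset (ℕ × ℕ) :=
  B.filter (fun c => c ∉ P ∧
    ∀ r ∈ P, ¬(r.2 = c.2 ∧ r.1 < c.1) ∧ ¬(r.1 = c.1 ∧ c.2 < r.2))

/-- `r_{P,(s,t)}`: the number of rooks of `P` strictly north-west of the cell `(s,t)`. -/
def nwCount (P : Finset (ℕ × ℕ)) (c : ℕ × ℕ) : ℕ :=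
  (P.filter (fun r => r.1 < c.1 ∧ c.2 < r.2)).card

/-- The weighted rook polynomial
`r_k(w;B) = ∑_{P ∈ 𝒩_k(B)} ∏_{(s,t) ∈ U_B(P)} w(s − r_{P,(s,t)}, t)`. -/
def rookPoly {A : Type*} [CommRing A] (w : ℕ → ℕ → A) (B : Finset (ℕ × ℕ)) (k : ℕ) : A :=
  ∑ P ∈ placements B k, ∏ c ∈ uncancelled B P, w (c.1 - nwCount P c) c.2


open Finset

@[to_additive]
lemma prod_card_filter_lt {M : Type*} [CommMonoid M] (F : Finset ℕ) (f : ℕ → M) :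
    ∏ b ∈ F, f #{a ∈ F | a < b} = ∏ q ∈ range #F, f q := by
  have hmono : StrictMonoOn (fun b => #{a ∈ F | a < b}) F := fun b hb b' _ hlt => by
    refine card_lt_card ((ssubset_iff_of_subset fun a ha => ?_).2
      ⟨b, by simp [mem_coe.1 hb, hlt], by simp⟩)
    simp only [mem_filter] at ha ⊢
    exact ⟨ha.1, ha.2.trans hlt⟩
  have hinj := hmono.injOn
  have himage : F.image (fun b => #{a ∈ F | a < b}) = range #F := by
    refine eq_of_subset_of_card_le (fun q hq => ?_) (by rw [card_image_of_injOn hinj, card_range])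
    obtain ⟨b, hb, rfl⟩ := mem_image.1 hq
    exact mem_range.2 (card_lt_card ⟨filter_subset _ _, fun h => by simpa using h hb⟩)
  rw [← himage, prod_image hinj]

section Placements

variable (v : ℕ × ℕ)

def rookPlacements (B : Finset (ℕ × ℕ)) : Finset (Finset (ℕ × ℕ)) :=
  B.powerset.filter (fun P => ∀ c ∈ P, ∀ d ∈ P, c ≠ d → c.1 ≠ d.1 ∧ c.2 ≠ d.2)

lemma mem_rookPlacements {B P : Finset (ℕ × ℕ)} :
    P ∈ rookPlacements B ↔
      P ⊆ B ∧ Set.InjOn Prod.fst (P : Set (ℕ × ℕ)) ∧ Set.InjOn Prod.snd (P : Set (ℕ × ℕ)) := by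
  simp only [rookPlacements, mem_filter, mem_powerset, Set.InjOn, mem_coe]
  refine and_congr_right fun _ => ⟨fun h => ⟨?_, ?_⟩, fun h c hc d hd hne => ⟨?_, ?_⟩⟩
  · exact fun c hc d hd e => by_contra fun hne => (h c hc d hd hne).1 e
  · exact fun c hc d hd e => by_contra fun hne => (h c hc d hd hne).2 e
  · exact fun e => hne (h.1 hc hd e)
  · exact fun e => hne (h.2 hc hd e)

lemma placements_eq_filter (B : Finset (ℕ × ℕ)) (k : ℕ) :
    placements B k = (rookPlacements B).filter (fun P => #P = k) := by
  ext P
  simp only [placements, rookPlacements, mem_filter]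
  tauto

lemma card_le_of_mem_rookPlacements {B P : Finset (ℕ × ℕ)} {m n : ℕ}
    (hB : B ⊆ Icc 1 m ×ˢ Icc 1 n) (hP : P ∈ rookPlacements B) : #P ≤ m ∧ #P ≤ n := by
  obtain ⟨hPB, hfst, hsnd⟩ := mem_rookPlacements.1 hP
  have hsub {f : ℕ × ℕ → ℕ} {k : ℕ} (hf : ∀ c ∈ B, f c ∈ Icc 1 k) : P.image f ⊆ Icc 1 k :=
    fun a ha => by obtain ⟨c, hc, rfl⟩ := mem_image.1 ha; exact hf c (hPB hc)
  constructor
  · simpa [card_image_of_injOn hfst] using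
      card_le_card (hsub fun c hc => (mem_product.1 (hB hc)).1)
  · simpa [card_image_of_injOn hsnd] using
      card_le_card (hsub fun c hc => (mem_product.1 (hB hc)).2)

lemma rookPlacements_map_addRight (B : Finset (ℕ × ℕ)) :
    rookPlacements (B.map (addRightEmbedding v)) =
      (rookPlacements B).map (mapEmbedding (addRightEmbedding v)).toEmbedding := by
  have hna (P : Finset (ℕ × ℕ)) :
      (∀ c ∈ P.map (addRightEmbedding v), ∀ d ∈ P.map (addRightEmbedding v),
        c ≠ d → c.1 ≠ d.1 ∧ c.2 ≠ d.2) ↔ ∀ c ∈ P, ∀ d ∈ P, c ≠ d → c.1 ≠ d.1 ∧ c.2 ≠ d.2 := by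
    simp only [forall_mem_map, addRightEmbedding_apply, ne_eq, add_left_inj, Prod.fst_add,
      Prod.snd_add]
  ext Q
  simp only [rookPlacements, mem_map, mem_filter, mem_powerset, RelEmbedding.coe_toEmbedding,
    mapEmbedding_apply]
  constructor
  · rintro ⟨hQ, hQna⟩
    obtain ⟨P, hPB, rfl⟩ := subset_map_iff.1 hQ
    exact ⟨P, ⟨hPB, (hna P).1 hQna⟩, rfl⟩
  · rintro ⟨P, ⟨hPB, hPna⟩, rfl⟩
    exact ⟨map_subset_map.2 hPB, (hna P).2 hPna⟩

lemma uncancelled_map_addRight (B P : Finset (ℕ × ℕ)) :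
    uncancelled (B.map (addRightEmbedding v)) (P.map (addRightEmbedding v)) =
      (uncancelled B P).map (addRightEmbedding v) := by
  rw [uncancelled, uncancelled, filter_map]
  simp only [Function.comp_def, mem_map']
  simp only [forall_mem_map, addRightEmbedding_apply, Prod.fst_add, Prod.snd_add, add_left_inj,
    add_lt_add_iff_right]

lemma nwCount_map_addRight (P : Finset (ℕ × ℕ)) (c : ℕ × ℕ) :
    nwCount (P.map (addRightEmbedding v)) (c + v) = nwCount P c := by
  simp [nwCount, filter_map]

lemma nwCount_le_fst {P : Finset (ℕ × ℕ)} (hP : Set.InjOn Prod.fst (P : Set (ℕ × ℕ)))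
    (c : ℕ × ℕ) : nwCount P c ≤ c.1 := by
  rw [nwCount, ← card_image_of_injOn (hP.mono (coe_subset.2 (filter_subset _ _)))]
  refine (card_le_card fun a ha => ?_).trans (card_range c.1).le
  obtain ⟨r, hr, rfl⟩ := mem_image.1 ha
  exact mem_range.2 (mem_filter.1 hr).2.1

lemma nwCount_insert_of_le {P : Finset (ℕ × ℕ)} {r c : ℕ × ℕ} (h : r.2 ≤ c.2) :
    nwCount (insert r P) c = nwCount P c := by
  rw [nwCount, filter_insert, if_neg (by omega), nwCount]

def freeColumns (m : ℕ) (X : Finset (ℕ × ℕ)) : Finset ℕ :=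
  Icc 1 m \ X.image Prod.fst

variable {m : ℕ} {T X : Finset (ℕ × ℕ)}

lemma card_freeColumns (hX : ∀ r ∈ X, r.1 ∈ Icc 1 m)
    (hinj : Set.InjOn Prod.fst (X : Set (ℕ × ℕ))) : #(freeColumns m X) = m - #X := by
  have hsub : X.image Prod.fst ⊆ Icc 1 m := fun a ha => by
    obtain ⟨r, hr, rfl⟩ := mem_image.1 ha
    exact hX r hr
  rw [freeColumns, card_sdiff_of_subset hsub, card_image_of_injOn hinj, Nat.card_Icc,
    Nat.add_sub_cancel]

lemma sub_nwCount_bottom (hX : ∀ r ∈ X, r.1 ∈ Icc 1 m ∧ 1 < r.2)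
    (hinj : Set.InjOn Prod.fst (X : Set (ℕ × ℕ))) {b : ℕ} (hb : b ∈ Icc 1 m) :
    b - nwCount X (b, 1) = #{a ∈ freeColumns m X | a < b} + 1 := by
  set C := X.image Prod.fst
  have hnw : nwCount X (b, 1) = #{a ∈ C | a < b} := by
    rw [nwCount, filter_image, card_image_of_injOn (hinj.mono (coe_subset.2 (filter_subset _ _)))]
    exact congrArg card (filter_congr fun r hr => by simp [(hX r hr).2])
  have hfree : {a ∈ freeColumns m X | a < b} = Ico 1 b \ {a ∈ C | a < b} := by
    ext a
    simp only [freeColumns, mem_filter, mem_sdiff, mem_Icc, mem_Ico] at hb ⊢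
    constructor
    · rintro ⟨⟨⟨h1, _⟩, hC⟩, hab⟩
      exact ⟨⟨h1, hab⟩, fun h => hC h.1⟩
    · rintro ⟨⟨h1, hab⟩, hC⟩
      exact ⟨⟨⟨h1, by omega⟩, fun h => hC ⟨h, hab⟩⟩, hab⟩
  have hCsub : {a ∈ C | a < b} ⊆ Ico 1 b := fun a ha => by
    obtain ⟨haC, hab⟩ := mem_filter.1 ha
    obtain ⟨r, hr, rfl⟩ := mem_image.1 haC
    exact mem_Ico.2 ⟨(mem_Icc.1 (hX r hr).1).1, hab⟩
  have hle := card_le_card hCsub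
  rw [hnw, hfree, card_sdiff_of_subset hCsub]
  rw [Nat.card_Ico] at hle ⊢
  have := (mem_Icc.1 hb).1
  omega

lemma uncancelled_bottom (hX : ∀ r ∈ X, 1 < r.2) :
    uncancelled (Icc 1 m ×ˢ {1}) X = freeColumns m X ×ˢ {1} := by
  ext ⟨b, t⟩
  simp only [uncancelled, freeColumns, mem_filter, mem_product, mem_sdiff, mem_image,
    mem_singleton, not_exists]
  constructor
  · rintro ⟨⟨hb, rfl⟩, -, hcanc⟩
    exact ⟨⟨hb, fun r ⟨hr, hrb⟩ => (hcanc r hr).2 ⟨hrb, hX r hr⟩⟩, rfl⟩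
  · rintro ⟨⟨hb, hfree⟩, rfl⟩
    exact ⟨⟨hb, rfl⟩, fun h => (hX _ h).false, fun r hr =>
      ⟨fun h => (hX r hr).ne' h.1, fun h => hfree r ⟨hr, h.1⟩⟩⟩

lemma uncancelled_bottom_insert (hX : ∀ r ∈ X, 1 < r.2) (b₀ : ℕ) :
    uncancelled (Icc 1 m ×ˢ {1}) (insert (b₀, 1) X) = {a ∈ freeColumns m X | a < b₀} ×ˢ {1} := by
  ext ⟨b, t⟩
  simp only [uncancelled, freeColumns, mem_filter, mem_product, mem_sdiff, mem_image,
    mem_singleton, not_exists, mem_insert, forall_eq_or_imp]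
  constructor
  · rintro ⟨⟨hb, rfl⟩, hne, ⟨h1, -⟩, hcanc⟩
    refine ⟨⟨⟨hb, fun r ⟨hr, hrb⟩ => (hcanc r hr).2 ⟨hrb, hX r hr⟩⟩, ?_⟩, rfl⟩
    have hb₀b : ¬b₀ < b := fun h => h1 ⟨rfl, h⟩
    have hbb₀ : b ≠ b₀ := fun h => hne (Or.inl (by rw [h]))
    omega
  · rintro ⟨⟨⟨hb, hfree⟩, hlt⟩, rfl⟩
    refine ⟨⟨hb, rfl⟩, ?_, ⟨by simp [hlt.le], by simp⟩, fun r hr =>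
      ⟨fun h => (hX r hr).ne' h.1, fun h => hfree r ⟨hr, h.1⟩⟩⟩
    rintro (h | h)
    · simp only [Prod.mk.injEq] at h; omega
    · exact (hX _ h).false

lemma disjoint_bottom (hT : ∀ c ∈ T, 1 < c.2) : Disjoint (Icc 1 m ×ˢ {1}) T :=
  disjoint_left.2 fun c hc hcT => (hT c hcT).ne' (mem_singleton.1 (mem_product.1 hc).2)

lemma filter_rookPlacements_bottom_union (hT : ∀ c ∈ T, 1 < c.2) :
    (rookPlacements (Icc 1 m ×ˢ {1} ∪ T)).filter (fun Q => ∀ r ∈ Q, r.2 ≠ 1) =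
      rookPlacements T := by
  ext Q
  simp only [rookPlacements, mem_filter, mem_powerset]
  constructor
  · rintro ⟨⟨hQ, hna⟩, hrow⟩
    refine ⟨fun r hr => ?_, hna⟩
    rcases mem_union.1 (hQ hr) with h | h
    · exact absurd (mem_singleton.1 (mem_product.1 h).2) (hrow r hr)
    · exact h
  · rintro ⟨hQ, hna⟩
    exact ⟨⟨hQ.trans subset_union_right, hna⟩, fun r hr => (hT r (hQ hr)).ne'⟩

lemma insert_mem_rookPlacements_bottom_union (hT : ∀ c ∈ T, 1 < c.2)
    (hX : X ∈ rookPlacements T) {b : ℕ} (hb : b ∈ freeColumns m X) :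
    insert (b, 1) X ∈ rookPlacements (Icc 1 m ×ˢ {1} ∪ T) := by
  obtain ⟨hXT, hfst, hsnd⟩ := mem_rookPlacements.1 hX
  obtain ⟨hbm, hbX⟩ := mem_sdiff.1 hb
  have hnot : (b, 1) ∉ X := fun h => (hT _ (hXT h)).false
  refine mem_rookPlacements.2 ⟨insert_subset (mem_union_left _ (by simp [hbm]))
    (hXT.trans subset_union_right), ?_, ?_⟩ <;>
    rw [coe_insert, Set.injOn_insert (mem_coe.not.2 hnot), ← coe_image]
  · exact ⟨hfst, mem_coe.not.2 hbX⟩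
  · exact ⟨hsnd, fun h => by
      obtain ⟨r, hr, hr1⟩ := mem_image.1 (mem_coe.1 h)
      exact (hT r (hXT hr)).ne' hr1⟩

lemma eq_of_insert_bottom_eq (hT : ∀ c ∈ T, 1 < c.2) {X Y : Finset (ℕ × ℕ)} (hX : X ⊆ T)
    (hY : Y ⊆ T) {b b' : ℕ} (h : insert (b, 1) X = insert (b', 1) Y) : b = b' ∧ X = Y := by
  have hbX : (b, 1) ∉ X := fun h => (hT _ (hX h)).false
  have hbY : (b, 1) ∉ Y := fun h => (hT _ (hY h)).false
  have hbb' : b = b' := by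
    rcases mem_insert.1 (h ▸ mem_insert_self (b, 1) X) with h | h
    · exact congrArg Prod.fst h
    · exact absurd h hbY
  subst hbb'
  exact ⟨rfl, by rw [← erase_insert hbX, h, erase_insert hbY]⟩

lemma exists_insert_bottom_eq (hT : ∀ c ∈ T, 1 < c.2) {Q : Finset (ℕ × ℕ)}
    (hQ : Q ∈ rookPlacements (Icc 1 m ×ˢ {1} ∪ T)) {r₀ : ℕ × ℕ} (hr₀ : r₀ ∈ Q) (hr₀1 : r₀.2 = 1) :
    ∃ X ∈ rookPlacements T, r₀.1 ∈ freeColumns m X ∧ insert (r₀.1, 1) X = Q := by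
  obtain ⟨hQB, hfst, hsnd⟩ := mem_rookPlacements.1 hQ
  have hXT : Q.erase r₀ ⊆ T := fun r hr => by
    obtain ⟨hne, hrQ⟩ := mem_erase.1 hr
    refine (mem_union.1 (hQB hrQ)).resolve_left fun h => hne (hsnd hrQ hr₀ ?_)
    rw [hr₀1, mem_singleton.1 (mem_product.1 h).2]
  have hr₀B : r₀.1 ∈ Icc 1 m := by
    rcases mem_union.1 (hQB hr₀) with h | h
    · exact (mem_product.1 h).1
    · exact absurd (hT _ h) (by omega)
  have hsub : (↑(Q.erase r₀) : Set (ℕ × ℕ)) ⊆ Q := coe_subset.2 (erase_subset _ _)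
  refine ⟨Q.erase r₀, mem_rookPlacements.2 ⟨hXT, hfst.mono hsub, hsnd.mono hsub⟩,
    mem_sdiff.2 ⟨hr₀B, fun h => ?_⟩, by rw [← hr₀1, insert_erase hr₀]⟩
  obtain ⟨r, hr, hr1⟩ := mem_image.1 h
  exact (mem_erase.1 hr).1 (hfst (mem_erase.1 hr).2 hr₀ hr1)

lemma sum_rookPlacements_bottom_union {M : Type*} [AddCommMonoid M] (hT : ∀ c ∈ T, 1 < c.2)
    (g : Finset (ℕ × ℕ) → M) :
    ∑ Q ∈ rookPlacements (Icc 1 m ×ˢ {1} ∪ T), g Q =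
      ∑ X ∈ rookPlacements T, (g X + ∑ b ∈ freeColumns m X, g (insert (b, 1) X)) := by
  rw [sum_add_distrib, ← sum_filter_add_sum_filter_not _ (fun Q => ∀ r ∈ Q, r.2 ≠ 1),
    filter_rookPlacements_bottom_union hT, sum_sigma']
  congr 1
  symm
  refine sum_nbij (fun x => insert (x.2, 1) x.1) (fun x hx => ?_) (fun x hx y hy hxy => ?_)
    (fun Q hQ => ?_) (fun _ _ => rfl)
  · obtain ⟨hX, hb⟩ := mem_sigma.1 hx
    exact mem_filter.2 ⟨insert_mem_rookPlacements_bottom_union hT hX hb,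
      fun h => h _ (mem_insert_self _ _) rfl⟩
  · obtain ⟨hbb', hXY⟩ := eq_of_insert_bottom_eq hT
      (mem_rookPlacements.1 (mem_sigma.1 hx).1).1 (mem_rookPlacements.1 (mem_sigma.1 hy).1).1 hxy
    exact Sigma.ext hXY (heq_of_eq hbb')
  · obtain ⟨hQ, hbot⟩ := mem_filter.1 hQ
    push Not at hbot
    obtain ⟨r₀, hr₀, hr₀1⟩ := hbot
    obtain ⟨X, hX, hb, rfl⟩ := exists_insert_bottom_eq hT hQ hr₀ hr₀1
    exact ⟨⟨X, r₀.1⟩, mem_sigma.2 ⟨hX, hb⟩, rfl⟩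

end Placements

lemma length_colHeights (α : List Bool) (t : ℕ) : (colHeights α t).length = α.count true := by
  induction α generalizing t with
  | nil => rfl
  | cons c α ih => cases c <;> simp [colHeights, ih]

lemma getD_colHeights_le (α : List Bool) (t i : ℕ) :
    (colHeights α t).getD i 0 ≤ t + α.count false := by
  induction α generalizing t i with
  | nil => simp [colHeights]
  | cons c α ih =>
    cases c
    · simpa [colHeights, List.count_cons, add_assoc, add_comm 1] using ih (t + 1) i
    · cases i
      · simp [colHeights]
      · simpa [colHeights] using ih t _

lemma colHeights_succ (α : List Bool) (t : ℕ) :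
    colHeights α (t + 1) = (colHeights α t).map (· + 1) := by
  induction α generalizing t with
  | nil => rfl
  | cons c α ih => cases c <;> simp [colHeights, ih]

lemma lt_count_of_lt_getD_colHeights {α : List Bool} {t i j : ℕ}
    (h : j < (colHeights α t).getD i 0) : i < α.count true := by
  by_contra hi
  rw [List.getD_eq_default _ _ (by rw [length_colHeights]; omega)] at h
  omega

lemma getD_colHeights_succ {α : List Bool} {t i : ℕ} (hi : i < α.count true) :
    (colHeights α (t + 1)).getD i 0 = (colHeights α t).getD i 0 + 1 := by
  have hi' : i < (colHeights α t).length := by rw [length_colHeights]; exact hi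
  rw [colHeights_succ, List.getD_eq_getElem _ _ (by simpa using hi'),
    List.getD_eq_getElem _ _ hi', List.getElem_map]

lemma mem_boardOf {α : List Bool} {c : ℕ × ℕ} :
    c ∈ boardOf α ↔ ∃ i j, c = (i + 1, j + 1) ∧ j < (colHeights α 0).getD i 0 := by
  simp only [boardOf, mem_image, mem_filter, mem_product, mem_range, Prod.exists]
  refine ⟨fun ⟨i, j, ⟨_, h⟩, hc⟩ => ⟨i, j, hc.symm, h⟩,
    fun ⟨i, j, hc, h⟩ => ⟨i, j, ⟨⟨?_, ?_⟩, h⟩, hc.symm⟩⟩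
  · exact (lt_count_of_lt_getD_colHeights h).trans_le List.count_le_length
  · have := getD_colHeights_le α 0 i
    have := List.count_le_length (l := α) (a := false)
    omega

lemma boardOf_nil : boardOf [] = ∅ := by
  ext c
  simp [mem_boardOf, colHeights]

lemma boardOf_cons_true (α : List Bool) :
    boardOf (true :: α) = (boardOf α).map (addRightEmbedding (1, 0)) := by
  ext c
  simp only [mem_boardOf, mem_map, addRightEmbedding_apply]
  constructor
  · rintro ⟨_ | i, j, rfl, h⟩
    · simp [colHeights] at h
    · exact ⟨(i + 1, j + 1), ⟨i, j, rfl, by simpa [colHeights] using h⟩, rfl⟩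
  · rintro ⟨_, ⟨i, j, rfl, h⟩, rfl⟩
    exact ⟨i + 1, j, rfl, by simpa [colHeights] using h⟩

lemma boardOf_cons_false (α : List Bool) :
    boardOf (false :: α) =
      Icc 1 (α.count true) ×ˢ {1} ∪ (boardOf α).map (addRightEmbedding (0, 1)) := by
  ext c
  simp only [mem_boardOf, mem_union, mem_product, mem_Icc, mem_singleton, mem_map,
    addRightEmbedding_apply]
  change (∃ i j, _ ∧ j < (colHeights α (0 + 1)).getD i 0) ↔ _
  constructor
  · rintro ⟨i, j, rfl, h⟩
    have hi := lt_count_of_lt_getD_colHeights h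
    rw [getD_colHeights_succ hi] at h
    rcases j with _ | j
    · exact Or.inl ⟨⟨by omega, by omega⟩, rfl⟩
    · exact Or.inr ⟨(i + 1, j + 1), ⟨i, j, rfl, by omega⟩, rfl⟩
  · rintro (⟨⟨h1, h2⟩, h3⟩ | ⟨e, ⟨i, j, rfl, h⟩, rfl⟩)
    · refine ⟨c.1 - 1, 0, Prod.ext (by simp; omega) (by simpa using h3), ?_⟩
      rw [getD_colHeights_succ (by omega)]
      omega
    · have hi := lt_count_of_lt_getD_colHeights h
      exact ⟨i, j + 1, rfl, by rw [getD_colHeights_succ hi]; omega⟩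

lemma boardOf_subset (α : List Bool) :
    boardOf α ⊆ Icc 1 (α.count true) ×ˢ Icc 1 (α.count false) := by
  induction α with
  | nil => simp [boardOf_nil]
  | cons c α ih =>
    intro d hd
    cases c
    · rw [boardOf_cons_false] at hd
      rcases mem_union.1 hd with h | h
      · simp only [mem_product, mem_Icc, mem_singleton] at h ⊢
        simp
        omega
      · obtain ⟨e, he, rfl⟩ := mem_map.1 h
        have := mem_product.1 (ih he)
        simp at this ⊢
        omega
    · rw [boardOf_cons_true] at hd
      obtain ⟨e, he, rfl⟩ := mem_map.1 hd
      have := mem_product.1 (ih he)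
      simp at this ⊢
      omega

section Weight

variable {A : Type*} [CommRing A] (w : ℕ → ℕ → A) {m : ℕ} {X : Finset (ℕ × ℕ)}

def rookWeight (B P : Finset (ℕ × ℕ)) : A :=
  ∏ c ∈ uncancelled B P, w (c.1 - nwCount P c) c.2

lemma rookWeight_map_addRight (v : ℕ × ℕ) (B P : Finset (ℕ × ℕ)) :
    rookWeight w (B.map (addRightEmbedding v)) (P.map (addRightEmbedding v)) =
      ∏ c ∈ uncancelled B P, w (c.1 + v.1 - nwCount P c) (c.2 + v.2) := by
  rw [rookWeight, uncancelled_map_addRight, prod_map]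
  simp [nwCount_map_addRight]

lemma rookWeight_union {B₁ B₂ : Finset (ℕ × ℕ)} (h : Disjoint B₁ B₂) (P : Finset (ℕ × ℕ)) :
    rookWeight w (B₁ ∪ B₂) P = rookWeight w B₁ P * rookWeight w B₂ P := by
  rw [rookWeight, uncancelled, filter_union,
    prod_union (disjoint_filter_filter h), ← uncancelled, ← uncancelled]
  rfl

lemma rookWeight_insert_of_lt {B P : Finset (ℕ × ℕ)} {r : ℕ × ℕ} (h : ∀ c ∈ B, r.2 < c.2) :
    rookWeight w B (insert r P) = rookWeight w B P := by
  have hunc : uncancelled B (insert r P) = uncancelled B P := by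
    refine filter_congr fun c hc => ?_
    have := h c hc
    rw [forall_mem_insert, mem_insert, not_or]
    grind
  rw [rookWeight, rookWeight, hunc]
  exact prod_congr rfl fun c hc =>
    by rw [nwCount_insert_of_le (h c (mem_filter.1 hc).1).le]

def bottomWeight (p : ℕ) : A :=
  ∏ q ∈ range p, w (q + 1) 1

lemma bottomWeight_succ (p : ℕ) : bottomWeight w (p + 1) = bottomWeight w p * w (p + 1) 1 := by
  rw [bottomWeight, bottomWeight, prod_range_succ]

lemma rookWeight_bottom (hX : ∀ r ∈ X, r.1 ∈ Icc 1 m ∧ 1 < r.2)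
    (hinj : Set.InjOn Prod.fst (X : Set (ℕ × ℕ))) :
    rookWeight w (Icc 1 m ×ˢ {1}) X = bottomWeight w #(freeColumns m X) := by
  rw [rookWeight, uncancelled_bottom fun r hr => (hX r hr).2, prod_product, bottomWeight,
    ← prod_card_filter_lt]
  refine prod_congr rfl fun b hb => ?_
  rw [prod_singleton, sub_nwCount_bottom hX hinj (mem_sdiff.1 hb).1]

lemma rookWeight_bottom_insert (hX : ∀ r ∈ X, r.1 ∈ Icc 1 m ∧ 1 < r.2)
    (hinj : Set.InjOn Prod.fst (X : Set (ℕ × ℕ))) (b₀ : ℕ) :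
    rookWeight w (Icc 1 m ×ˢ {1}) (insert (b₀, 1) X) =
      bottomWeight w #{a ∈ freeColumns m X | a < b₀} := by
  rw [rookWeight, uncancelled_bottom_insert (fun r hr => (hX r hr).2), prod_product, bottomWeight,
    ← prod_card_filter_lt]
  refine prod_congr rfl fun b hb => ?_
  obtain ⟨hbF, hlt⟩ := mem_filter.1 hb
  rw [prod_singleton, nwCount_insert_of_le (r := (b₀, 1)) (c := (b, 1)) le_rfl,
    sub_nwCount_bottom hX hinj (mem_sdiff.1 hbF).1, filter_filter]
  congr 3
  exact filter_congr fun a _ => by omega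

variable {T : Finset (ℕ × ℕ)}

lemma rookWeight_bottom_union (hT : ∀ c ∈ T, c.1 ∈ Icc 1 m ∧ 1 < c.2)
    (hX : X ∈ rookPlacements T) :
    rookWeight w (Icc 1 m ×ˢ {1} ∪ T) X = bottomWeight w (m - #X) * rookWeight w T X := by
  obtain ⟨hXT, hfst, -⟩ := mem_rookPlacements.1 hX
  have hXc : ∀ r ∈ X, r.1 ∈ Icc 1 m ∧ 1 < r.2 := fun r hr => hT r (hXT hr)
  rw [rookWeight_union w (disjoint_bottom fun c hc => (hT c hc).2), rookWeight_bottom w hXc hfst,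
    card_freeColumns (fun r hr => (hXc r hr).1) hfst]

lemma rookWeight_bottom_union_insert (hT : ∀ c ∈ T, c.1 ∈ Icc 1 m ∧ 1 < c.2)
    (hX : X ∈ rookPlacements T) (b : ℕ) :
    rookWeight w (Icc 1 m ×ˢ {1} ∪ T) (insert (b, 1) X) =
      bottomWeight w #{a ∈ freeColumns m X | a < b} * rookWeight w T X := by
  obtain ⟨hXT, hfst, -⟩ := mem_rookPlacements.1 hX
  rw [rookWeight_union w (disjoint_bottom fun c hc => (hT c hc).2),
    rookWeight_bottom_insert w (fun r hr => hT r (hXT hr)) hfst,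
    rookWeight_insert_of_lt w fun c hc => (hT c hc).2]

end Weight

section NormalOrdering

variable {A R : Type*} [CommRing A] [Ring R] (w : ℕ → ℕ → A) (ι : A →+* R) {x y : R}

lemma semiconjBy_map_prod {γ : Type*} {z : R} (S : Finset γ) {a b : γ → A}
    (h : ∀ c ∈ S, SemiconjBy z (ι (a c)) (ι (b c))) :
    SemiconjBy z (ι (∏ c ∈ S, a c)) (ι (∏ c ∈ S, b c)) := by
  classical
  induction S using Finset.induction_on with
  | empty => simp
  | insert c S hc ih =>
    rw [prod_insert hc, prod_insert hc, map_mul, map_mul]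
    exact (h c (mem_insert_self c S)).mul_right (ih fun d hd => h d (mem_insert_of_mem hd))

lemma pow_semiconjBy_of_shift (hx : ∀ s t : ℕ, x * ι (w s t) = ι (w (s + 1) t) * x)
    (p s t : ℕ) : SemiconjBy (x ^ p) (ι (w s t)) (ι (w (s + p) t)) := by
  induction p generalizing s with
  | zero => simp
  | succ p ih =>
    rw [pow_succ, ← add_assoc, add_right_comm]
    exact (ih (s + 1)).mul_left (hx s t)

lemma y_mul_x_pow (hyx : y * x = ι (w 1 1) * (x * y) + 1)
    (hx : ∀ s t : ℕ, x * ι (w s t) = ι (w (s + 1) t) * x) (p : ℕ) :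
    y * x ^ p = ι (bottomWeight w p) * x ^ p * y +
      ∑ q ∈ range p, ι (bottomWeight w q) * x ^ (p - 1) := by
  induction p with
  | zero => simp [bottomWeight]
  | succ p ih =>
    have hsum : ∑ q ∈ range p, ι (bottomWeight w q) * x ^ (p - 1) * x =
        ∑ q ∈ range p, ι (bottomWeight w q) * x ^ p :=
      sum_congr rfl fun q hq => by
        rw [mul_assoc, ← pow_succ, Nat.sub_add_cancel (by have := mem_range.1 hq; omega)]
    calc y * x ^ (p + 1)
        = ι (bottomWeight w p) * (x ^ p * ι (w 1 1)) * (x * y) + ι (bottomWeight w p) * x ^ p +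
            ∑ q ∈ range p, ι (bottomWeight w q) * x ^ (p - 1) * x := by
          rw [pow_succ, ← mul_assoc, ih, add_mul, sum_mul, mul_assoc _ y x, hyx]
          noncomm_ring
      _ = ι (bottomWeight w (p + 1)) * x ^ (p + 1) * y +
            ∑ q ∈ range (p + 1), ι (bottomWeight w q) * x ^ (p + 1 - 1) := by
          rw [pow_semiconjBy_of_shift w ι hx p 1 1, hsum, bottomWeight_succ, map_mul,
            sum_range_succ, Nat.add_sub_cancel, add_comm 1 p]
          noncomm_ring

def rookNormalForm (x y : R) (B : Finset (ℕ × ℕ)) (m n : ℕ) : R :=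
  ∑ P ∈ rookPlacements B, ι (rookWeight w B P) * x ^ (m - #P) * y ^ (n - #P)

variable {m n : ℕ} {S : Finset (ℕ × ℕ)}

lemma x_mul_rookNormalForm (hx : ∀ s t : ℕ, x * ι (w s t) = ι (w (s + 1) t) * x)
    (hS : S ⊆ Icc 1 m ×ˢ Icc 1 n) :
    x * rookNormalForm w ι x y S m n =
      rookNormalForm w ι x y (S.map (addRightEmbedding (1, 0))) (m + 1) n := by
  rw [rookNormalForm, rookNormalForm, rookPlacements_map_addRight, sum_map, mul_sum]
  refine sum_congr rfl fun P hP => ?_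
  have hPm := (card_le_of_mem_rookPlacements hS hP).1
  have hfst := (mem_rookPlacements.1 hP).2.1
  have hxP : x * ι (rookWeight w S P) =
      ι (∏ c ∈ uncancelled S P, w (c.1 + 1 - nwCount P c) (c.2 + 0)) * x :=
    semiconjBy_map_prod ι _ fun c _ => by
      rw [add_zero, Nat.sub_add_comm (nwCount_le_fst hfst c)]
      exact hx _ _
  simp only [RelEmbedding.coe_toEmbedding, mapEmbedding_apply, card_map]
  rw [rookWeight_map_addRight, ← mul_assoc, ← mul_assoc, hxP, mul_assoc _ x, ← pow_succ',
    Nat.sub_add_comm hPm]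

lemma y_mul_rookNormalForm (hyx : y * x = ι (w 1 1) * (x * y) + 1)
    (hx : ∀ s t : ℕ, x * ι (w s t) = ι (w (s + 1) t) * x)
    (hy : ∀ s t : ℕ, y * ι (w s t) = ι (w s (t + 1)) * y) (hS : S ⊆ Icc 1 m ×ˢ Icc 1 n) :
    y * rookNormalForm w ι x y S m n =
      rookNormalForm w ι x y (Icc 1 m ×ˢ {1} ∪ S.map (addRightEmbedding (0, 1))) m (n + 1) := by
  set T := S.map (addRightEmbedding (0, 1))
  have hT : ∀ c ∈ T, c.1 ∈ Icc 1 m ∧ 1 < c.2 := fun c hc => by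
    obtain ⟨d, hd, rfl⟩ := mem_map.1 hc
    obtain ⟨h1, h2⟩ := mem_product.1 (hS hd)
    simp only [addRightEmbedding_apply, Prod.fst_add, Prod.snd_add, add_zero]
    exact ⟨h1, by simp at h2 ⊢; omega⟩
  rw [rookNormalForm, rookNormalForm, sum_rookPlacements_bottom_union (fun c hc => (hT c hc).2),
    rookPlacements_map_addRight, sum_map, mul_sum]
  refine sum_congr rfl fun P hP => ?_
  simp only [RelEmbedding.coe_toEmbedding, mapEmbedding_apply]
  set X := P.map (addRightEmbedding (0, 1))
  have hX : X ∈ rookPlacements T := by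
    rw [rookPlacements_map_addRight]
    exact mem_map_of_mem _ hP
  obtain ⟨hXT, hXfst, -⟩ := mem_rookPlacements.1 hX
  have hPn := (card_le_of_mem_rookPlacements hS hP).2
  have hyP : y * ι (rookWeight w S P) = ι (rookWeight w T X) * y := by
    rw [rookWeight_map_addRight]
    exact semiconjBy_map_prod ι _ fun c _ => by rw [add_zero]; exact hy _ _
  have hcard : ∀ b ∈ freeColumns m X, #(insert (b, 1) X) = #P + 1 := fun b _ => by
    rw [card_insert_of_notMem fun h => (hT _ (hXT h)).2.false, card_map]
  rw [sum_congr rfl fun b hb => by rw [hcard b hb, rookWeight_bottom_union_insert w hT hX],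
    sum_card_filter_lt (freeColumns m X) fun q =>
      ι (bottomWeight w q * rookWeight w T X) * x ^ (m - (#P + 1)) * y ^ (n + 1 - (#P + 1)),
    rookWeight_bottom_union w hT hX,
    card_freeColumns (fun r hr => (hT r (hXT hr)).1) hXfst, card_map,
    show n + 1 - #P = n - #P + 1 by omega, show n + 1 - (#P + 1) = n - #P by omega,
    show m - (#P + 1) = m - #P - 1 by omega, ← mul_assoc, ← mul_assoc, hyP, mul_assoc _ y,
    y_mul_x_pow w ι hyx hx]
  simp only [mul_comm (bottomWeight w _), map_mul, mul_add, add_mul, mul_sum, sum_mul, mul_assoc,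
    pow_succ']

lemma sum_range_rookPoly {B : Finset (ℕ × ℕ)} {m n : ℕ} (hB : B ⊆ Icc 1 m ×ˢ Icc 1 n) :
    ∑ k ∈ range (min m n + 1), ι (rookPoly w B k) * x ^ (m - k) * y ^ (n - k) =
      rookNormalForm w ι x y B m n := by
  rw [rookNormalForm, ← sum_fiberwise_of_maps_to (g := card) fun P hP =>
    mem_range.2 (Nat.lt_succ_of_le (le_min_iff.2 (card_le_of_mem_rookPlacements hB hP)))]
  refine sum_congr rfl fun k _ => ?_
  rw [rookPoly, placements_eq_filter, map_sum, sum_mul, sum_mul]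
  exact sum_congr rfl fun P hP => by rw [(mem_filter.1 hP).2]; rfl

lemma prod_eq_rookNormalForm (hyx : y * x = ι (w 1 1) * (x * y) + 1)
    (hx : ∀ s t : ℕ, x * ι (w s t) = ι (w (s + 1) t) * x)
    (hy : ∀ s t : ℕ, y * ι (w s t) = ι (w s (t + 1)) * y) (α : List Bool) :
    (α.map (fun c => if c then x else y)).prod =
      rookNormalForm w ι x y (boardOf α) (α.count true) (α.count false) := by
  induction α with
  | nil => simp [rookNormalForm, rookPlacements, boardOf_nil, rookWeight, uncancelled,
    filter_singleton]
  | cons c α ih =>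
    rw [List.map_cons, List.prod_cons, ih]
    cases c
    · rw [if_neg Bool.false_ne_true, y_mul_rookNormalForm w ι hyx hx hy (boardOf_subset α),
        boardOf_cons_false]
      simp
    · rw [if_pos rfl, x_mul_rookNormalForm w ι hx (boardOf_subset α), boardOf_cons_true]
      simp

end NormalOrdering

/-- Normal ordering in the weight-dependent Weyl algebra: for `x`, `y` satisfying
`yx = w(1,1)xy + 1`, `x·w(s,t) = w(s+1,t)·x`, `y·w(s,t) = w(s,t+1)·y` (the weights
`w(s,t)` generating a commutative ring `A` mapped into `R` by `ι`), every word `α`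
with `m` `x`'s and `n` `y`'s satisfies
`α = ∑_{k=0}^{min(m,n)} r_k(w;B_α) x^{m-k} y^{n-k}`. -/
theorem stmt19 {A R : Type*} [CommRing A] [Ring R]
    (w : ℕ → ℕ → A) (ι : A →+* R) (x y : R)
    (hyx : y * x = ι (w 1 1) * (x * y) + 1)
    (hx : ∀ s t : ℕ, x * ι (w s t) = ι (w (s + 1) t) * x)
    (hy : ∀ s t : ℕ, y * ι (w s t) = ι (w s (t + 1)) * y)
    (α : List Bool) :
    (α.map (fun c => if c then x else y)).prod =
      ∑ k ∈ Finset.range (min (α.count true) (α.count false) + 1),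
        ι (rookPoly w (boardOf α) k) * x ^ (α.count true - k) * y ^ (α.count false - k) := by
  rw [sum_range_rookPoly w ι (boardOf_subset α)]
  exact prod_eq_rookNormalForm w ι hyx hx hy α
end
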